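/- arXiv:2502.18241 — 2 statements merged into one kernel-verified Lean document; each statement's English description precedes it below -/
import Mathlib

section
/- Let M1 < M2 be coprime integers with M1 ≥ 2, and let D_cp = {m M2 : 0 ≤ m ≤ 2M1−1} ∪ {m M1 : 1 ≤ m ≤ M2−1} be the co-prime array position set with M = 2M1 + M2 − 1. Then the beam pattern G(Δ; D_cp) = (1/M²)|Σ_{d∈D_cp} exp(iπ d Δ)|² is strictly decreasing in Δ on the interval (0, 1/(M1M2)]. In particular, the first local minimum point of G(·; D_cp) is at least 1/(M1M2). -/
open Finset

/-- Co-prime array position set. -/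
def Dcp (M1 M2 : ℕ) : Finset ℕ :=
  (Finset.range (2 * M1)).image (fun m => m * M2) ∪
    (Finset.Icc 1 (M2 - 1)).image (fun m => m * M1)

/-- Beam pattern of the co-prime array (`M = 2M1 + M2 − 1`). -/
noncomputable def Gcp (M1 M2 : ℕ) (Δ : ℝ) : ℝ :=
  (1 / (2 * (M1 : ℝ) + (M2 : ℝ) - 1) ^ 2) *
    (‖∑ d ∈ Dcp M1 M2, Complex.exp (Complex.I * Real.pi * (d : ℝ) * Δ)‖) ^ 2

/-!
Split `Dcp M1 M2` into its two uniform subarrays `{m M2 : m < 2 M1}` and `{m M1 : 0 < m < M2}`,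
which are disjoint by coprimality. With `t = π Δ / 2`, each subarray sum is a phase factor times
a real Dirichlet kernel, `a = D_{2 M1}(M2 t)` and `b = D_{M2 - 1}(M1 t)`, so
`M² G = a² + b² + 2 a b cos((M1 - 1) M2 t)`. For `0 < Δ ≤ 1 / (M1 M2)` every cosine occurring
here has its argument in `[0, π]`, so `a`, `b` and `cos((M1 - 1) M2 t)` all decrease, `a`
strictly. They are nonnegative: the cosine's argument stays below `π / 2`, and `D_n` decreases
to `D_n(π / n) = 0`, the sum of the `n`-th roots of unity. A local minimum cannot lie inside
an interval on which `G` strictly decreases.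
-/

open Real

theorem sq_add_sq_add_two_mul_mul_lt {R : Type*} [CommRing R] [LinearOrder R]
    [IsStrictOrderedRing R] {a₁ a₂ b₁ b₂ c₁ c₂ : R} (ha₂ : 0 ≤ a₂) (ha : a₂ < a₁)
    (hb₂ : 0 ≤ b₂) (hb : b₂ ≤ b₁) (hc₂ : 0 ≤ c₂) (hc : c₂ ≤ c₁) :
    a₂ ^ 2 + b₂ ^ 2 + 2 * (a₂ * b₂ * c₂) < a₁ ^ 2 + b₁ ^ 2 + 2 * (a₁ * b₁ * c₁) := by
  have ha₁ : 0 ≤ a₁ := ha₂.trans ha.le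
  have hab : a₂ * b₂ * c₂ ≤ a₁ * b₁ * c₁ :=
    mul_le_mul (mul_le_mul ha.le hb hb₂ ha₁) hc hc₂ (mul_nonneg ha₁ (hb₂.trans hb))
  have hsa : a₂ ^ 2 < a₁ ^ 2 := by gcongr
  have hsb : b₂ ^ 2 ≤ b₁ ^ 2 := by gcongr
  linarith

theorem IsLocalMin.le_of_strictAntiOn_Ioc {α β : Type*} [LinearOrder α] [TopologicalSpace α]
    [OrderTopology α] [DenselyOrdered α] [NoMaxOrder α] [Preorder β] {f : α → β} {a b x : α}
    (h : IsLocalMin f x) (hf : StrictAntiOn f (Set.Ioc a b)) (hx : a < x) : b ≤ x := by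
  by_contra! hxb
  obtain ⟨y, hfy, hy⟩ :=
    ((h.filter_mono nhdsWithin_le_nhds).and (Ioo_mem_nhdsGT hxb)).exists
  exact (hf ⟨hx, hxb.le⟩ ⟨hx.trans hy.1, hy.2.le⟩ hy.1).not_ge hfy

theorem cos_mul_le_cos_mul {k θ₁ θ₂ : ℝ} (h₁ : 0 ≤ θ₁) (h : θ₁ ≤ θ₂) (h₂ : |k| * θ₂ ≤ π) :
    cos (k * θ₂) ≤ cos (k * θ₁) := by
  rw [← cos_abs (k * θ₂), ← cos_abs (k * θ₁), abs_mul, abs_mul, abs_of_nonneg h₁,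
    abs_of_nonneg (h₁.trans h)]
  exact cos_le_cos_of_nonneg_of_le_pi (by positivity) h₂ (by gcongr)

theorem cos_mul_lt_cos_mul {k θ₁ θ₂ : ℝ} (hk : k ≠ 0) (h₁ : 0 ≤ θ₁) (h : θ₁ < θ₂)
    (h₂ : |k| * θ₂ ≤ π) : cos (k * θ₂) < cos (k * θ₁) := by
  rw [← cos_abs (k * θ₂), ← cos_abs (k * θ₁), abs_mul, abs_mul, abs_of_nonneg h₁,
    abs_of_nonneg (h₁.trans h.le)]
  exact cos_lt_cos_of_nonneg_of_le_pi (by positivity) h₂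
    (mul_lt_mul_of_pos_left h (abs_pos.2 hk))

theorem sq_norm_exp_mul_add_exp_mul (α β a b : ℝ) :
    ‖Complex.exp (α * Complex.I) * a + Complex.exp (β * Complex.I) * b‖ ^ 2 =
      a ^ 2 + b ^ 2 + 2 * (a * b * cos (α - β)) := by
  have h : Complex.exp (α * Complex.I) * a + Complex.exp (β * Complex.I) * b =
      (cos α * a + cos β * b : ℝ) + (sin α * a + sin β * b : ℝ) * Complex.I := by
    rw [Complex.exp_mul_I, Complex.exp_mul_I]; push_cast; ring
  rw [h, Complex.sq_norm, Complex.normSq_add_mul_I, cos_sub]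
  linear_combination a ^ 2 * sin_sq_add_cos_sq α + b ^ 2 * sin_sq_add_cos_sq β

/-- `∑_{m<n} exp (i (2m + 1 - n) θ)`, which is real (`= sin (n θ) / sin θ`). -/
noncomputable def dirichletCos (n : ℕ) (θ : ℝ) : ℝ :=
  ∑ m ∈ range n, cos ((2 * m + 1 - n : ℝ) * θ)

theorem abs_two_mul_add_one_sub_le {m n : ℕ} (hm : m < n) : |(2 * m + 1 - n : ℝ)| ≤ n := by
  have : (m : ℝ) + 1 ≤ n := by exact_mod_cast hm
  rw [abs_le]; constructor <;> linarith [(m.cast_nonneg : (0 : ℝ) ≤ m)]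

theorem strictAntiOn_dirichletCos {n : ℕ} (hn : 2 ≤ n) :
    StrictAntiOn (dirichletCos n) (Set.Icc 0 (π / n)) := by
  rintro θ₁ ⟨h₁, -⟩ θ₂ ⟨-, h₂⟩ h
  have hn' : (0 : ℝ) < n := by positivity
  have hbound : ∀ m < n, |(2 * m + 1 - n : ℝ)| * θ₂ ≤ π := fun m hm =>
    calc |(2 * m + 1 - n : ℝ)| * θ₂ ≤ n * (π / n) :=
          mul_le_mul (abs_two_mul_add_one_sub_le hm) h₂ (h₁.trans h.le) hn'.le
      _ = π := by field_simp
  refine sum_lt_sum (fun m hm => cos_mul_le_cos_mul h₁ h.le (hbound m (mem_range.1 hm)))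
    ⟨0, mem_range.2 (by omega), cos_mul_lt_cos_mul ?_ h₁ h (hbound 0 (by omega))⟩
  have : (2 : ℝ) ≤ n := by exact_mod_cast hn
  push_cast; linarith

theorem sum_sin_two_mul_add_one_sub_mul (n : ℕ) (θ : ℝ) :
    ∑ m ∈ range n, sin ((2 * m + 1 - n : ℝ) * θ) = 0 := by
  have h := sum_range_reflect (fun m : ℕ => sin ((2 * m + 1 - n : ℝ) * θ)) n
  rw [sum_congr rfl fun m hm => ?_, sum_neg_distrib] at h
  · linarith
  · rw [mem_range] at hm
    rw [← sin_neg, Nat.cast_sub (by omega), Nat.cast_sub (by omega)]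
    ring_nf

theorem sum_exp_eq_exp_mul_dirichletCos (n : ℕ) (φ θ : ℝ) :
    ∑ m ∈ range n, Complex.exp ((φ + 2 * m * θ : ℝ) * Complex.I) =
      Complex.exp ((φ + (n - 1) * θ : ℝ) * Complex.I) * dirichletCos n θ := by
  have hterm : ∀ m ∈ range n, Complex.exp ((φ + 2 * m * θ : ℝ) * Complex.I) =
      Complex.exp ((φ + (n - 1) * θ : ℝ) * Complex.I) *
        (cos ((2 * m + 1 - n : ℝ) * θ) + sin ((2 * m + 1 - n : ℝ) * θ) * Complex.I) := by
    intro m _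
    rw [Complex.ofReal_cos, Complex.ofReal_sin, ← Complex.exp_mul_I, ← Complex.exp_add]
    push_cast; ring_nf
  rw [sum_congr rfl hterm, ← mul_sum, sum_add_distrib, ← sum_mul, ← Complex.ofReal_sum,
    ← Complex.ofReal_sum, sum_sin_two_mul_add_one_sub_mul, dirichletCos]
  simp

theorem dirichletCos_pi_div_eq_zero {n : ℕ} (hn : 2 ≤ n) : dirichletCos n (π / n) = 0 := by
  have hζ := Complex.isPrimitiveRoot_exp n (by omega)
  have hsum := sum_exp_eq_exp_mul_dirichletCos n 0 (π / n)
  have hpow : ∀ m ∈ range n, Complex.exp ((0 + 2 * m * (π / n) : ℝ) * Complex.I) =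
      Complex.exp (2 * π * Complex.I / n) ^ m := by
    intro m _
    rw [← Complex.exp_nat_mul]
    push_cast; ring_nf
  rw [sum_congr rfl hpow, hζ.geom_sum_eq_zero (by omega), eq_comm] at hsum
  exact_mod_cast (mul_eq_zero.1 hsum).resolve_left (Complex.exp_ne_zero _)

theorem dirichletCos_nonneg {n : ℕ} (hn : 2 ≤ n) {θ : ℝ} (h₀ : 0 ≤ θ) (h : θ ≤ π / n) :
    0 ≤ dirichletCos n θ :=
  dirichletCos_pi_div_eq_zero hn ▸
    (strictAntiOn_dirichletCos hn).antitoneOn ⟨h₀, h⟩ ⟨by positivity, le_rfl⟩ h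

theorem sum_Dcp {M : Type*} [AddCommMonoid M] {M1 M2 : ℕ} (hM1 : 0 < M1) (hM2 : 0 < M2)
    (hc : M1.Coprime M2) (f : ℕ → M) :
    ∑ d ∈ Dcp M1 M2, f d =
      ∑ m ∈ range (2 * M1), f (m * M2) + ∑ j ∈ range (M2 - 1), f ((j + 1) * M1) := by
  have hdisj : Disjoint ((range (2 * M1)).image (· * M2)) ((Icc 1 (M2 - 1)).image (· * M1)) := by
    simp only [disjoint_left, mem_image, mem_Icc, not_exists, not_and]
    rintro _ ⟨m, -, rfl⟩ j ⟨hj1, hj2⟩ he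
    have := Nat.le_of_dvd hj1 (hc.symm.dvd_of_dvd_mul_right ⟨m, by rw [he, mul_comm]⟩)
    omega
  rw [Dcp, sum_union hdisj, sum_image fun _ _ _ _ => Nat.eq_of_mul_eq_mul_right hM2,
    sum_image fun _ _ _ _ => Nat.eq_of_mul_eq_mul_right hM1, ← Ico_add_one_right_eq_Icc,
    Nat.sub_add_cancel (Nat.one_le_iff_ne_zero.2 hM2.ne'), sum_Ico_eq_sum_range]
  simp only [add_comm 1]

noncomputable def coprimeArrayPower (M1 M2 : ℕ) (t : ℝ) : ℝ :=
  dirichletCos (2 * M1) (M2 * t) ^ 2 + dirichletCos (M2 - 1) (M1 * t) ^ 2 +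
    2 * (dirichletCos (2 * M1) (M2 * t) * dirichletCos (M2 - 1) (M1 * t) *
      cos ((M1 - 1) * (M2 * t)))

theorem Gcp_eq {M1 M2 : ℕ} (hM1 : 0 < M1) (hM2 : 0 < M2) (hc : M1.Coprime M2) (Δ : ℝ) :
    Gcp M1 M2 Δ = 1 / (2 * M1 + M2 - 1 : ℝ) ^ 2 * coprimeArrayPower M1 M2 (π * Δ / 2) := by
  set t := π * Δ / 2
  have ha : ∑ m ∈ range (2 * M1), Complex.exp (Complex.I * π * ((m * M2 : ℕ) : ℝ) * Δ) =
      Complex.exp (((2 * M1 - 1) * (M2 * t) : ℝ) * Complex.I) * dirichletCos (2 * M1) (M2 * t) := by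
    calc _ = ∑ m ∈ range (2 * M1), Complex.exp ((0 + 2 * m * (M2 * t) : ℝ) * Complex.I) :=
          sum_congr rfl fun m _ => by push_cast [t]; ring_nf
      _ = _ := by rw [sum_exp_eq_exp_mul_dirichletCos]; push_cast; ring_nf
  have hb : ∑ j ∈ range (M2 - 1), Complex.exp (Complex.I * π * (((j + 1) * M1 : ℕ) : ℝ) * Δ) =
      Complex.exp ((M2 * (M1 * t) : ℝ) * Complex.I) * dirichletCos (M2 - 1) (M1 * t) := by
    calc _ = ∑ j ∈ range (M2 - 1),
          Complex.exp ((2 * (M1 * t) + 2 * j * (M1 * t) : ℝ) * Complex.I) :=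
          sum_congr rfl fun j _ => by push_cast [t]; ring_nf
      _ = _ := by rw [sum_exp_eq_exp_mul_dirichletCos, Nat.cast_pred hM2]; ring_nf
  rw [Gcp, sum_Dcp hM1 hM2 hc, ha, hb, sq_norm_exp_mul_add_exp_mul, coprimeArrayPower]
  ring_nf

theorem strictAntiOn_coprimeArrayPower {M1 M2 : ℕ} (hM1 : 0 < M1) (hM2 : 3 ≤ M2) :
    StrictAntiOn (coprimeArrayPower M1 M2) (Set.Icc 0 (π / (2 * M1 * M2))) := by
  rintro t₁ ⟨h₁, -⟩ t₂ ⟨-, h₂⟩ hlt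
  have hM1' : (1 : ℝ) ≤ M1 := by exact_mod_cast hM1
  have hM2' : (3 : ℝ) ≤ M2 := by exact_mod_cast hM2
  have hθ₁ : 0 ≤ (M2 : ℝ) * t₁ := mul_nonneg (by positivity) h₁
  have hφ₁ : 0 ≤ (M1 : ℝ) * t₁ := mul_nonneg (by positivity) h₁
  have hθlt : (M2 : ℝ) * t₁ < M2 * t₂ := by gcongr
  have hφle : (M1 : ℝ) * t₁ ≤ M1 * t₂ := by gcongr
  have hθ₂ : 0 ≤ (M2 : ℝ) * t₂ := hθ₁.trans hθlt.le
  have hθ : (M2 : ℝ) * t₂ ≤ π / ↑(2 * M1) := by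
    rw [le_div_iff₀ (by positivity)] at h₂ ⊢; push_cast; linarith
  have hφ : (M1 : ℝ) * t₂ ≤ π / ↑(M2 - 1) := calc
    (M1 : ℝ) * t₂ ≤ π / (2 * M2) := by rw [le_div_iff₀ (by positivity)] at h₂ ⊢; linarith
    _ ≤ π / ↑(M2 - 1) := by
      rw [Nat.cast_pred (by omega)]; gcongr <;> linarith
  have hψ : ((M1 : ℝ) - 1) * (M2 * t₂) ≤ π / 2 := calc
    ((M1 : ℝ) - 1) * (M2 * t₂) ≤ M1 * (M2 * t₂) := mul_le_mul_of_nonneg_right (by linarith) hθ₂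
    _ ≤ π / 2 := by rw [le_div_iff₀ (by positivity)] at h₂ ⊢; linarith
  refine sq_add_sq_add_two_mul_mul_lt
    (dirichletCos_nonneg (by omega) hθ₂ hθ)
    (strictAntiOn_dirichletCos (by omega) ⟨hθ₁, hθlt.le.trans hθ⟩ ⟨hθ₂, hθ⟩ hθlt)
    (dirichletCos_nonneg (by omega) (hφ₁.trans hφle) hφ)
    ((strictAntiOn_dirichletCos (by omega)).antitoneOn ⟨hφ₁, hφle.trans hφ⟩
      ⟨hφ₁.trans hφle, hφ⟩ hφle)
    (cos_nonneg_of_mem_Icc ⟨by linarith [pi_pos, mul_nonneg (sub_nonneg.2 hM1') hθ₂], hψ⟩)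
    (cos_mul_le_cos_mul hθ₁ hθlt.le ?_)
  rw [abs_of_nonneg (by linarith)]; linarith [pi_pos]

theorem strictAntiOn_Gcp {M1 M2 : ℕ} (hM1 : 0 < M1) (hM2 : 3 ≤ M2) (hc : M1.Coprime M2) :
    StrictAntiOn (Gcp M1 M2) (Set.Ioc 0 (1 / ((M1 : ℝ) * M2))) := by
  have hscale : ∀ Δ ∈ Set.Ioc 0 (1 / ((M1 : ℝ) * M2)),
      π * Δ / 2 ∈ Set.Icc 0 (π / (2 * M1 * M2)) := by
    rintro Δ ⟨h₀, h⟩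
    refine ⟨by positivity, ?_⟩
    rw [le_div_iff₀ (by positivity)] at h ⊢
    nlinarith [pi_pos]
  have hM : (0 : ℝ) < 2 * M1 + M2 - 1 := by
    have : (3 : ℝ) ≤ M2 := by exact_mod_cast hM2
    linarith [(M1.cast_nonneg : (0 : ℝ) ≤ M1)]
  intro Δ₁ h₁ Δ₂ h₂ hlt
  rw [Gcp_eq hM1 (by omega) hc, Gcp_eq hM1 (by omega) hc]
  exact mul_lt_mul_of_pos_left
    (strictAntiOn_coprimeArrayPower hM1 hM2 (hscale Δ₁ h₁) (hscale Δ₂ h₂) (by gcongr))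
    (by positivity)

/-- the co-prime array beam pattern is strictly decreasing on
`(0, 1/(M1 M2)]`; in particular every positive local minimum point is at least
`1/(M1 M2)`. -/
theorem coprime_beam_pattern_strictAnti (M1 M2 : ℕ) (hM1 : 2 ≤ M1) (h12 : M1 < M2)
    (hc : Nat.Coprime M1 M2) :
    StrictAntiOn (Gcp M1 M2) (Set.Ioc 0 (1 / ((M1 : ℝ) * (M2 : ℝ)))) ∧
      ∀ Δ : ℝ, 0 < Δ → IsLocalMin (Gcp M1 M2) Δ →
        1 / ((M1 : ℝ) * (M2 : ℝ)) ≤ Δ := by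
  have hanti := strictAntiOn_Gcp (by omega) (by omega) hc
  exact ⟨hanti, fun Δ hΔ hmin => hmin.le_of_strictAntiOn_Ioc hanti hΔ⟩
end

section
/- Let N1 ≥ 1 and N2 ≥ 1 be integers, let D_na = {0, 1, ..., N1−1} ∪ {(m+1)(N1+1)−1 : 0 ≤ m ≤ N2−1} be the nested array position set with M = N1 + N2, and let n be an integer with 1 ≤ n ≤ N1. Then at the grating-lobe point Δ = 2n/(N1+1), the side lobe height satisfies (N2−1)²/M² ≤ G(Δ; D_na) ≤ (N2+1)²/M², i.e., (N2−1)² ≤ |Σ_{d∈D_na} exp(iπ d Δ)|² ≤ (N2+1)². -/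
/-!
At `Δ = 2n/(N₁+1)` the phase `ω = exp(iπΔ)` is an `(N₁+1)`-st root of unity other than `1`.
Hence the dense block `0, …, N₁-1` sums to `-ω^{N₁}`, while every sparse position
`m(N₁+1) + N₁` contributes `ω^{N₁}`, so the array factor is exactly `(N₂ - 1) ω^{N₁}`
and its squared modulus is `(N₂ - 1)²`.
-/

open Finset

/-- Two-level nested array position set. -/
def Dna (N1 N2 : ℕ) : Finset ℕ :=
  Finset.range N1 ∪ (Finset.range N2).image (fun m => (m + 1) * (N1 + 1) - 1)

open Complex
open scoped Real

lemma nestedPos_eq (N1 m : ℕ) : (m + 1) * (N1 + 1) - 1 = m * (N1 + 1) + N1 :=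
  Nat.sub_eq_of_eq_add (by ring)

lemma sum_Dna {M : Type*} [AddCommMonoid M] (N1 N2 : ℕ) (f : ℕ → M) :
    ∑ d ∈ Dna N1 N2, f d = ∑ d ∈ range N1, f d + ∑ m ∈ range N2, f (m * (N1 + 1) + N1) := by
  have hdisj : Disjoint (range N1) ((range N2).image fun m => (m + 1) * (N1 + 1) - 1) := by
    simp only [disjoint_left, mem_range, mem_image, nestedPos_eq]
    rintro d hd ⟨m, -, rfl⟩
    omega
  have hinj : Set.InjOn (fun m => (m + 1) * (N1 + 1) - 1) (range N2) := by
    intro a _ b _ hab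
    simpa [nestedPos_eq] using hab
  rw [Dna, sum_union hdisj, sum_image hinj]
  simp only [nestedPos_eq]

lemma geom_sum_range_eq_neg_pow {R : Type*} [Ring R] [NoZeroDivisors R] {ω : R} {k : ℕ}
    (h : ω ^ (k + 1) = 1) (hω : ω ≠ 1) : ∑ d ∈ range k, ω ^ d = -ω ^ k := by
  have hzero : ∑ d ∈ range (k + 1), ω ^ d = 0 := by
    refine mul_right_cancel₀ (sub_ne_zero.mpr hω) ?_
    rw [geom_sum_mul, h, sub_self, zero_mul]
  rw [sum_range_succ] at hzero
  exact eq_neg_of_add_eq_zero_left hzero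

lemma sum_Dna_pow {R : Type*} [CommRing R] [NoZeroDivisors R] {ω : R} (N1 N2 : ℕ)
    (h : ω ^ (N1 + 1) = 1) (hω : ω ≠ 1) :
    ∑ d ∈ Dna N1 N2, ω ^ d = (N2 - 1) * ω ^ N1 := by
  have hsparse (m : ℕ) : ω ^ (m * (N1 + 1) + N1) = ω ^ N1 := by
    rw [pow_add, mul_comm m, pow_mul, h, one_pow, one_mul]
  simp only [sum_Dna, geom_sum_range_eq_neg_pow h hω, hsparse, sum_const, card_range,
    nsmul_eq_mul]
  ring

lemma norm_sum_Dna_pow_sq {ω : ℂ} (N1 N2 : ℕ) (h : ω ^ (N1 + 1) = 1) (hω : ω ≠ 1) :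
    ‖∑ d ∈ Dna N1 N2, ω ^ d‖ ^ 2 = ((N2 : ℝ) - 1) ^ 2 := by
  have hnorm : ‖ω‖ = 1 := norm_eq_one_of_pow_eq_one h N1.succ_ne_zero
  have hcoeff : ((N2 : ℂ) - 1) = ((N2 - 1 : ℝ) : ℂ) := by push_cast; ring
  rw [sum_Dna_pow N1 N2 h hω, norm_mul, norm_pow, hnorm, one_pow, mul_one, hcoeff,
    norm_real, Real.norm_eq_abs, sq_abs]

lemma exp_grating_lobe (N1 n d : ℕ) :
    exp (I * π * (d : ℝ) * (2 * (n : ℝ) / ((N1 : ℝ) + 1))) =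
      (exp (2 * π * I / (N1 + 1 : ℕ)) ^ n) ^ d := by
  rw [← exp_nat_mul, ← exp_nat_mul]
  congr 1
  push_cast
  field_simp

lemma norm_sum_Dna_exp_grating_lobe_sq {N1 n : ℕ} (N2 : ℕ) (hn1 : 1 ≤ n) (hn2 : n ≤ N1) :
    ‖∑ d ∈ Dna N1 N2,
      exp (I * π * (d : ℝ) * (2 * (n : ℝ) / ((N1 : ℝ) + 1)))‖ ^ 2 = ((N2 : ℝ) - 1) ^ 2 := by
  have hζ : IsPrimitiveRoot (exp (2 * π * I / (N1 + 1 : ℕ))) (N1 + 1) :=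
    isPrimitiveRoot_exp _ N1.succ_ne_zero
  have hω : (exp (2 * π * I / (N1 + 1 : ℕ)) ^ n) ^ (N1 + 1) = 1 := by
    rw [pow_right_comm, hζ.pow_eq_one, one_pow]
  have hω_ne : exp (2 * π * I / (N1 + 1 : ℕ)) ^ n ≠ 1 :=
    hζ.pow_ne_one_of_pos_of_lt (by omega) (by omega)
  simp only [exp_grating_lobe]
  exact norm_sum_Dna_pow_sq N1 N2 hω hω_ne

theorem nested_side_lobe_height_general (N1 N2 : ℕ)
    (n : ℕ) (hn1 : 1 ≤ n) (hn2 : n ≤ N1) :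
    (((N2 : ℝ) - 1) ^ 2 ≤
        (‖∑ d ∈ Dna N1 N2,
          Complex.exp (Complex.I * Real.pi * (d : ℝ) * (2 * (n : ℝ) / ((N1 : ℝ) + 1)))‖) ^ 2 ∧
      (‖∑ d ∈ Dna N1 N2,
          Complex.exp (Complex.I * Real.pi * (d : ℝ) * (2 * (n : ℝ) / ((N1 : ℝ) + 1)))‖) ^ 2 ≤
        ((N2 : ℝ) + 1) ^ 2) ∧
    (((N2 : ℝ) - 1) ^ 2 / ((N1 : ℝ) + (N2 : ℝ)) ^ 2 ≤
        (1 / ((N1 : ℝ) + (N2 : ℝ)) ^ 2) *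
          (‖∑ d ∈ Dna N1 N2,
            Complex.exp (Complex.I * Real.pi * (d : ℝ) * (2 * (n : ℝ) / ((N1 : ℝ) + 1)))‖) ^ 2 ∧
      (1 / ((N1 : ℝ) + (N2 : ℝ)) ^ 2) *
          (‖∑ d ∈ Dna N1 N2,
            Complex.exp (Complex.I * Real.pi * (d : ℝ) * (2 * (n : ℝ) / ((N1 : ℝ) + 1)))‖) ^ 2 ≤
        ((N2 : ℝ) + 1) ^ 2 / ((N1 : ℝ) + (N2 : ℝ)) ^ 2) := by
  have hle : ((N2 : ℝ) - 1) ^ 2 ≤ ((N2 : ℝ) + 1) ^ 2 := by nlinarith [N2.cast_nonneg (α := ℝ)]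
  rw [norm_sum_Dna_exp_grating_lobe_sq N2 hn1 hn2, one_div_mul_eq_div]
  exact ⟨⟨le_rfl, hle⟩, le_rfl, div_le_div_of_nonneg_right hle (sq_nonneg _)⟩

/-- at the grating-lobe point `Δ = 2n/(N1+1)` with `1 ≤ n ≤ N1`, the side
lobe height satisfies `(N2−1)²/M² ≤ G(Δ; D_na) ≤ (N2+1)²/M²`, i.e.
`(N2−1)² ≤ |Σ_{d∈D_na} exp(iπ d Δ)|² ≤ (N2+1)²`, where `M = N1 + N2`. -/
theorem nested_side_lobe_height (N1 N2 : ℕ) (hN1 : 1 ≤ N1) (hN2 : 1 ≤ N2)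
    (n : ℕ) (hn1 : 1 ≤ n) (hn2 : n ≤ N1) :
    (((N2 : ℝ) - 1) ^ 2 ≤
        (‖∑ d ∈ Dna N1 N2,
          Complex.exp (Complex.I * Real.pi * (d : ℝ) * (2 * (n : ℝ) / ((N1 : ℝ) + 1)))‖) ^ 2 ∧
      (‖∑ d ∈ Dna N1 N2,
          Complex.exp (Complex.I * Real.pi * (d : ℝ) * (2 * (n : ℝ) / ((N1 : ℝ) + 1)))‖) ^ 2 ≤
        ((N2 : ℝ) + 1) ^ 2) ∧
    (((N2 : ℝ) - 1) ^ 2 / ((N1 : ℝ) + (N2 : ℝ)) ^ 2 ≤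
        (1 / ((N1 : ℝ) + (N2 : ℝ)) ^ 2) *
          (‖∑ d ∈ Dna N1 N2,
            Complex.exp (Complex.I * Real.pi * (d : ℝ) * (2 * (n : ℝ) / ((N1 : ℝ) + 1)))‖) ^ 2 ∧
      (1 / ((N1 : ℝ) + (N2 : ℝ)) ^ 2) *
          (‖∑ d ∈ Dna N1 N2,
            Complex.exp (Complex.I * Real.pi * (d : ℝ) * (2 * (n : ℝ) / ((N1 : ℝ) + 1)))‖) ^ 2 ≤
        ((N2 : ℝ) + 1) ^ 2 / ((N1 : ℝ) + (N2 : ℝ)) ^ 2) :=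
  nested_side_lobe_height_general N1 N2 n hn1 hn2
end
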